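/- arXiv:1705.07853 — 3 statements merged into one kernel-verified Lean document; each statement's English description precedes it below -/
import Mathlib

section
/- Let M be a positive definite d×d matrix with eigenvalues λ_1 ≥ ... ≥ λ_d > 0 and orthonormal eigenvectors u_1,...,u_d, and let X be a convex subset of ℝ^d (e.g. the unit Euclidean ball). If f : X → ℝ is differentiable everywhere on X, then for all x, x' ∈ X one has |f(x) − f(x')| ≤ ‖x − x'‖_M · √( Σ_{i=1}^d ‖∇_{u_i} f‖_∞² / λ_i ), where ‖∇_{u_i} f‖_∞ = sup_{z ∈ X} ∇f(z)^⊤ u_i and ‖x − x'‖_M = √((x−x')^⊤ M (x−x')). -/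
open Matrix Finset

/-- The Mahalanobis norm `‖v‖_M = √(vᵀ M v)` induced by a matrix `M`. -/
noncomputable def mahalanobisNorm {d : ℕ} (M : Matrix (Fin d) (Fin d) ℝ) (v : Fin d → ℝ) : ℝ :=
  Real.sqrt (v ⬝ᵥ M.mulVec v)

/-!
Along the segment from `x'` to `x`, the mean value theorem bounds `|f x - f x'|` by the supremum
of `|Df(z) (x - x')|` over `z ∈ X`. Expanding `x - x' = ∑ c_k u_k` in the eigenbasis gives
`Df(z) (x - x') = ∑ c_k Df(z) u_k` and `‖x - x'‖_M² = ∑ λ_k c_k²`, so Cauchy–Schwarz with the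
weights `λ_k` and `1 / λ_k` bounds it by `‖x - x'‖_M √(∑ (Df(z) u_k)² / λ_k)`, and
`|Df(z) u_k| ≤ ‖∇_{u_k} f‖_∞`.
-/

theorem sum_Icc_one_eq_sum_fin (d : ℕ) {α : Type*} [AddCommMonoid α] (F : ℕ → α) :
    ∑ i ∈ Icc 1 d, F i = ∑ k : Fin d, F (k + 1) := by
  rw [Fin.sum_univ_eq_sum_range (fun k => F (k + 1)), range_eq_Ico, sum_Ico_add' F 0 d 1,
    zero_add, ← Order.succ_eq_add_one, Finset.Ico_succ_right_eq_Icc]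

section Orthonormal

variable {n : Type*} [Fintype n] [DecidableEq n] {w : n → n → ℝ}

theorem sum_dotProduct_smul_eq_self (hw : ∀ k l, w k ⬝ᵥ w l = if k = l then 1 else 0)
    (v : n → ℝ) : ∑ k, (w k ⬝ᵥ v) • w k = v := by
  have hU : Matrix.of w * (Matrix.of w)ᵀ = 1 := by
    ext k l
    simpa [Matrix.mul_apply, Matrix.one_apply, dotProduct] using hw k l
  calc ∑ k, (w k ⬝ᵥ v) • w k = (Matrix.of w)ᵀ *ᵥ (Matrix.of w *ᵥ v) := by
        rw [mulVec_transpose, vecMul_eq_sum]; rfl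
    _ = v := by rw [mulVec_mulVec, mul_eq_one_comm.mp hU, one_mulVec]

theorem dotProduct_mulVec_eq_sum_eigenvalue_mul_sq
    (hw : ∀ k l, w k ⬝ᵥ w l = if k = l then 1 else 0)
    {M : Matrix n n ℝ} {lam : n → ℝ} (heig : ∀ k, M *ᵥ w k = lam k • w k) (v : n → ℝ) :
    v ⬝ᵥ M *ᵥ v = ∑ k, lam k * (w k ⬝ᵥ v) ^ 2 := by
  calc v ⬝ᵥ M *ᵥ v = v ⬝ᵥ M *ᵥ ∑ k, (w k ⬝ᵥ v) • w k := by
        rw [sum_dotProduct_smul_eq_self hw]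
    _ = ∑ k, lam k * (w k ⬝ᵥ v) ^ 2 := by
      rw [mulVec_sum, dotProduct_sum]
      refine sum_congr rfl fun k _ => ?_
      rw [mulVec_smul, heig, dotProduct_smul, dotProduct_smul, dotProduct_comm v, smul_eq_mul,
        smul_eq_mul]
      ring

theorem abs_apply_le_sqrt_dotProduct_mulVec_mul_sqrt
    (hw : ∀ k l, w k ⬝ᵥ w l = if k = l then 1 else 0)
    {M : Matrix n n ℝ} {lam : n → ℝ} (heig : ∀ k, M *ᵥ w k = lam k • w k)
    (hlam : ∀ k, 0 < lam k) (φ : (n → ℝ) →ₗ[ℝ] ℝ) (v : n → ℝ) :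
    |φ v| ≤ √(v ⬝ᵥ M *ᵥ v) * √(∑ k, φ (w k) ^ 2 / lam k) := by
  have hφv : φ v = ∑ k, (w k ⬝ᵥ v) * φ (w k) := by
    conv_lhs => rw [← sum_dotProduct_smul_eq_self hw v]
    simp only [map_sum, map_smul, smul_eq_mul]
  have hQ := dotProduct_mulVec_eq_sum_eigenvalue_mul_sq hw heig v
  have hQ_nonneg : 0 ≤ v ⬝ᵥ M *ᵥ v := by
    rw [hQ]
    exact sum_nonneg fun k _ => mul_nonneg (hlam k).le (sq_nonneg _)
  -- Cauchy–Schwarz for `(w k ⬝ᵥ v) * φ (w k)` against the weights `lam k` and `(lam k)⁻¹`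
  have hCS : (φ v) ^ 2 ≤ (v ⬝ᵥ M *ᵥ v) * ∑ k, φ (w k) ^ 2 / lam k := by
    rw [hφv, hQ]
    refine sum_sq_le_sum_mul_sum_of_sq_le_mul _
      (fun k _ => mul_nonneg (hlam k).le (sq_nonneg _))
      (fun k _ => div_nonneg (sq_nonneg _) (hlam k).le) fun k _ => le_of_eq ?_
    field_simp [(hlam k).ne']
  rw [← Real.sqrt_mul hQ_nonneg]
  exact Real.abs_le_sqrt hCS

end Orthonormal

theorem Convex.norm_sub_le_of_norm_fderivWithin_apply_le {E F : Type*} [NormedAddCommGroup E]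
    [NormedSpace ℝ E] [NormedAddCommGroup F] [NormedSpace ℝ F] {X : Set E} (hX : Convex ℝ X)
    {f : E → F} (hf : DifferentiableOn ℝ f X) {x y : E} (hx : x ∈ X) (hy : y ∈ X) {C : ℝ}
    (hC : ∀ z ∈ X, ‖fderivWithin ℝ f X z (x - y)‖ ≤ C) : ‖f x - f y‖ ≤ C := by
  have hγX := hX.mapsTo_lineMap hy hx
  have hfγ : ∀ t ∈ Set.Icc (0 : ℝ) 1, HasDerivWithinAt (f ∘ AffineMap.lineMap y x)
      (fderivWithin ℝ f X (AffineMap.lineMap y x t) (x - y)) (Set.Icc 0 1) t :=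
    fun t ht => (hf _ (hγX ht)).hasFDerivWithinAt.comp_hasDerivWithinAt t
      AffineMap.hasDerivAt_lineMap.hasDerivWithinAt hγX
  simpa using norm_image_sub_le_of_norm_deriv_le_segment_01' hfγ
    fun t ht => hC _ (hγX (Set.Ico_subset_Icc_self ht))

theorem lipschitz_in_M_metric_of_bounded_directional_derivatives_general
    (d : ℕ)
    (M : Matrix (Fin d) (Fin d) ℝ)
    (lam : ℕ → ℝ) (u : ℕ → (Fin d → ℝ))
    (huON : ∀ i ∈ Finset.Icc 1 d, ∀ j ∈ Finset.Icc 1 d,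
      u i ⬝ᵥ u j = if i = j then (1 : ℝ) else 0)
    (heig : ∀ i ∈ Finset.Icc 1 d, M.mulVec (u i) = lam i • u i)
    (hpos : ∀ i ∈ Finset.Icc 1 d, 0 < lam i)
    (X : Set (Fin d → ℝ)) (hX : Convex ℝ X)
    (f : (Fin d → ℝ) → ℝ) (hf : DifferentiableOn ℝ f X)
    (L : ℕ → ℝ)
    (hL : ∀ i ∈ Finset.Icc 1 d,
      IsLUB {r : ℝ | ∃ z ∈ X, r = |fderivWithin ℝ f X z (u i)|} (L i))
    (x x' : Fin d → ℝ) (hx : x ∈ X) (hx' : x' ∈ X) :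
    |f x - f x'| ≤
      mahalanobisNorm M (x - x') *
        Real.sqrt (∑ i ∈ Finset.Icc 1 d, (L i) ^ 2 / lam i) := by
  have hmem : ∀ k : Fin d, (k : ℕ) + 1 ∈ Icc 1 d := fun k => by simp
  have hw : ∀ k l : Fin d, u (k + 1) ⬝ᵥ u (l + 1) = if k = l then 1 else 0 := fun k l => by
    simp [huON _ (hmem k) _ (hmem l), Fin.val_inj]
  rw [sum_Icc_one_eq_sum_fin, ← Real.norm_eq_abs]
  refine hX.norm_sub_le_of_norm_fderivWithin_apply_le hf hx hx' fun z hz => ?_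
  set D := fderivWithin ℝ f X z
  calc ‖D (x - x')‖
      ≤ mahalanobisNorm M (x - x') * √(∑ k : Fin d, D (u (k + 1)) ^ 2 / lam (k + 1)) :=
        abs_apply_le_sqrt_dotProduct_mulVec_mul_sqrt hw (fun k => heig _ (hmem k))
          (fun k => hpos _ (hmem k)) D.toLinearMap (x - x')
    _ ≤ mahalanobisNorm M (x - x') * √(∑ k : Fin d, L (k + 1) ^ 2 / lam (k + 1)) := by
        refine mul_le_mul_of_nonneg_left (Real.sqrt_le_sqrt (sum_le_sum fun k _ => ?_))
          (Real.sqrt_nonneg _)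
        have hDL : |D (u (k + 1))| ≤ L (k + 1) := (hL _ (hmem k)).1 ⟨z, hz, rfl⟩
        exact div_le_div_of_nonneg_right (sq_le_sq.2 (hDL.trans (le_abs_self _)))
          (hpos _ (hmem k)).le

/-- Bounded derivatives imply Lipschitzness in the `M`-metric.
Let `M` be positive definite with eigenvalues `λ_1 ≥ ... ≥ λ_d > 0` and orthonormal
eigenvectors `u_1, ..., u_d`, and let `X ⊆ ℝ^d` be convex.  If `f : X → ℝ` is
differentiable everywhere on `X`, then for all `x, x' ∈ X`,
`|f(x) − f(x')| ≤ ‖x − x'‖_M √(Σ_{i=1}^d ‖∇_{u_i} f‖_∞² / λ_i)`,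
where `L i = ‖∇_{u_i} f‖_∞` is the supremum over `z ∈ X` of the (absolute) directional
derivative of `f` at `z` in direction `u_i` (the supremum over unit vectors in the span
of `u_i`, as in the paper's definition of `‖∇_V f‖_∞`). -/
theorem lipschitz_in_M_metric_of_bounded_directional_derivatives
    (d : ℕ) (hd : 0 < d)
    (M : Matrix (Fin d) (Fin d) ℝ) (hM : M.PosDef)
    (lam : ℕ → ℝ) (u : ℕ → (Fin d → ℝ))
    (huON : ∀ i ∈ Finset.Icc 1 d, ∀ j ∈ Finset.Icc 1 d,
      u i ⬝ᵥ u j = if i = j then (1 : ℝ) else 0)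
    (heig : ∀ i ∈ Finset.Icc 1 d, M.mulVec (u i) = lam i • u i)
    (hord : ∀ i ∈ Finset.Icc 1 d, ∀ j ∈ Finset.Icc 1 d, i ≤ j → lam j ≤ lam i)
    (hpos : ∀ i ∈ Finset.Icc 1 d, 0 < lam i)
    (X : Set (Fin d → ℝ)) (hX : Convex ℝ X)
    (f : (Fin d → ℝ) → ℝ) (hf : DifferentiableOn ℝ f X)
    (L : ℕ → ℝ)
    (hL : ∀ i ∈ Finset.Icc 1 d,
      IsLUB {r : ℝ | ∃ z ∈ X, r = |fderivWithin ℝ f X z (u i)|} (L i))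
    (x x' : Fin d → ℝ) (hx : x ∈ X) (hx' : x' ∈ X) :
    |f x - f x'| ≤
      mahalanobisNorm M (x - x') *
        Real.sqrt (∑ i ∈ Finset.Icc 1 d, (L i) ^ 2 / lam i) :=
  lipschitz_in_M_metric_of_bounded_directional_derivatives_general d M lam u huON heig hpos X hX f
    hf L hL x x' hx hx'
end

section
/- Let λ_1 ≥ ... ≥ λ_d > 0, let E = { x ∈ ℝ^d : Σ_{i=1}^d x_i²/λ_i ≤ 1 } be the ellipsoid with semi-axes √λ_i along an orthonormal basis u_1,...,u_d, fix ε > 0, let s ∈ {1,...,d−1} satisfy λ_{s+1} ≤ ε², and let Ẽ = { x ∈ E : x_i = 0 for i = s+1,...,d } be the truncated ellipsoid. If S̃ ⊆ Ẽ is an ε-cover of Ẽ in the Euclidean norm, then S̃ is a (√2 ε)-cover of E in the Euclidean norm: for every x ∈ E there exists x̃ ∈ S̃ with ‖x − x̃‖_2 ≤ √2 ε. -/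
open Matrix Finset

/-! Split the coordinates of `x ∈ E` along `u_1, …, u_d` into the head `i ≤ s` and the tail
`i > s`. Keeping the head gives a point `x' ∈ Ẽ`, which some `y ∈ S̃` approximates within `ε`.
Since `y` has no tail, Parseval gives `‖x - y‖² = ‖x' - y‖² + ∑_{i>s} x_i²`, and the tail is at
most `λ_{s+1} ∑_{i>s} x_i²/λ_i ≤ ε²`. -/

section OrthonormalOn

variable {ι n : Type*} [Fintype n] [DecidableEq ι] {I : Finset ι} {u : ι → n → ℝ}

def orthoProj (u : ι → n → ℝ) (T : Finset ι) (x : n → ℝ) : n → ℝ :=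
  ∑ i ∈ T, (x ⬝ᵥ u i) • u i

variable (hu : ∀ i ∈ I, ∀ j ∈ I, u i ⬝ᵥ u j = if i = j then 1 else 0)
include hu

theorem orthoProj_dotProduct {T : Finset ι} (hT : T ⊆ I) (x : n → ℝ)
    {j : ι} (hj : j ∈ I) :
    orthoProj u T x ⬝ᵥ u j = if j ∈ T then x ⬝ᵥ u j else 0 := by
  have hterm : ∀ i ∈ T, (x ⬝ᵥ u i) • u i ⬝ᵥ u j = if i = j then x ⬝ᵥ u i else 0 := by
    intro i hi
    rw [smul_dotProduct, hu i (hT hi) j hj, smul_eq_mul, mul_ite, mul_one, mul_zero]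
  rw [orthoProj, sum_dotProduct, sum_congr rfl hterm, sum_ite_eq']

theorem dotProduct_self_eq_sum_sq [DecidableEq n] (hcard : #I = Fintype.card n)
    (x : n → ℝ) : x ⬝ᵥ x = ∑ i ∈ I, (x ⬝ᵥ u i) ^ 2 := by
  let G : Matrix I n ℝ := Matrix.of fun i => u i
  have hGGt : G * Gᵀ = 1 := by
    ext i j
    change u i ⬝ᵥ u j = _
    rw [hu i i.2 j j.2, Matrix.one_apply]
    exact if_congr Subtype.ext_iff.symm rfl rfl
  have hGtG : Gᵀ * G = 1 :=
    (mul_eq_one_comm_of_equiv (Fintype.equivOfCardEq (by simpa using hcard))).mp hGGt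
  calc x ⬝ᵥ x = x ⬝ᵥ ((Gᵀ * G) *ᵥ x) := by rw [hGtG, one_mulVec]
    _ = (G *ᵥ x) ⬝ᵥ (G *ᵥ x) := by rw [← mulVec_mulVec, dotProduct_mulVec, vecMul_transpose]
    _ = ∑ i ∈ I, (x ⬝ᵥ u i) ^ 2 := by
      rw [← sum_coe_sort I]
      refine sum_congr rfl fun i _ => ?_
      rw [sq, dotProduct_comm]
      rfl

theorem sub_dotProduct_self_eq_orthoProj_add_sum_sq [DecidableEq n] (hcard : #I = Fintype.card n)
    {J : Finset ι} (hJ : J ⊆ I) (x y : n → ℝ) (hy : ∀ j ∈ J, y ⬝ᵥ u j = 0) :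
    (x - y) ⬝ᵥ (x - y) = (orthoProj u (I \ J) x - y) ⬝ᵥ (orthoProj u (I \ J) x - y) +
      ∑ j ∈ J, (x ⬝ᵥ u j) ^ 2 := by
  set p := orthoProj u (I \ J) x
  have hp {i} (hi : i ∈ I) := orthoProj_dotProduct hu (sdiff_subset (t := J)) x hi
  have hhead : ∀ i ∈ I \ J, ((p - y) ⬝ᵥ u i) ^ 2 = ((x - y) ⬝ᵥ u i) ^ 2 := by
    intro i hi
    rw [sub_dotProduct, sub_dotProduct, hp (mem_sdiff.1 hi).1, if_pos hi]
  have htail : ∀ j ∈ J, ((x - y) ⬝ᵥ u j) ^ 2 = ((p - y) ⬝ᵥ u j) ^ 2 + (x ⬝ᵥ u j) ^ 2 := by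
    intro j hj
    rw [sub_dotProduct, sub_dotProduct, hp (hJ hj), if_neg (notMem_sdiff_of_mem_right hj), hy j hj]
    ring
  rw [dotProduct_self_eq_sum_sq hu hcard, dotProduct_self_eq_sum_sq hu hcard, ← sum_sdiff hJ,
    ← sum_sdiff hJ (f := fun i => ((p - y) ⬝ᵥ u i) ^ 2), sum_congr rfl hhead, sum_congr rfl htail,
    sum_add_distrib, add_assoc]

theorem sum_sq_div_orthoProj_le {T : Finset ι} (hT : T ⊆ I) {lam : ι → ℝ}
    (hlam : ∀ i ∈ I, 0 ≤ lam i) (x : n → ℝ) :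
    ∑ i ∈ I, (orthoProj u T x ⬝ᵥ u i) ^ 2 / lam i ≤ ∑ i ∈ I, (x ⬝ᵥ u i) ^ 2 / lam i := by
  refine sum_le_sum fun i hi => ?_
  rw [orthoProj_dotProduct hu hT x hi]
  split_ifs
  · rfl
  · simpa using div_nonneg (sq_nonneg (x ⬝ᵥ u i)) (hlam i hi)

end OrthonormalOn

theorem sum_sq_le_of_sum_sq_div_le_one {ι : Type*} {I J : Finset ι} (hJ : J ⊆ I)
    {a lam : ι → ℝ} (hpos : ∀ i ∈ I, 0 < lam i) (h : ∑ i ∈ I, a i ^ 2 / lam i ≤ 1)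
    {ε : ℝ} (hsmall : ∀ j ∈ J, lam j ≤ ε ^ 2) : ∑ j ∈ J, a j ^ 2 ≤ ε ^ 2 :=
  calc ∑ j ∈ J, a j ^ 2 = ∑ j ∈ J, lam j * (a j ^ 2 / lam j) :=
        sum_congr rfl fun j hj => (mul_div_cancel₀ _ (hpos j (hJ hj)).ne').symm
    _ ≤ ∑ j ∈ J, ε ^ 2 * (a j ^ 2 / lam j) :=
        sum_le_sum fun j hj => mul_le_mul_of_nonneg_right (hsmall j hj)
          (div_nonneg (sq_nonneg _) (hpos j (hJ hj)).le)
    _ = ε ^ 2 * ∑ j ∈ J, a j ^ 2 / lam j := (mul_sum _ _ _).symm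
    _ ≤ ε ^ 2 * ∑ i ∈ I, a i ^ 2 / lam i :=
        mul_le_mul_of_nonneg_left (sum_le_sum_of_subset_of_nonneg hJ fun i hi _ =>
          div_nonneg (sq_nonneg _) (hpos i hi).le) (sq_nonneg ε)
    _ ≤ ε ^ 2 := mul_le_of_le_one_right (sq_nonneg ε) h

theorem truncated_ellipsoid_cover_general
    (d : ℕ) (lam : ℕ → ℝ) (u : ℕ → (Fin d → ℝ))
    (huON : ∀ i ∈ Finset.Icc 1 d, ∀ j ∈ Finset.Icc 1 d,
      u i ⬝ᵥ u j = if i = j then (1 : ℝ) else 0)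
    (hord : ∀ i ∈ Finset.Icc 1 d, ∀ j ∈ Finset.Icc 1 d, i ≤ j → lam j ≤ lam i)
    (hpos : ∀ i ∈ Finset.Icc 1 d, 0 < lam i)
    (ε : ℝ)
    (s : ℕ) (hls : lam (s + 1) ≤ ε ^ 2)
    (E Etil : Set (Fin d → ℝ))
    (hE : E = {x | ∑ i ∈ Finset.Icc 1 d, (x ⬝ᵥ u i) ^ 2 / lam i ≤ 1})
    (hEtil : Etil = {x ∈ E | ∀ i ∈ Finset.Icc (s + 1) d, x ⬝ᵥ u i = 0})
    (Stil : Finset (Fin d → ℝ)) (hStil : ↑Stil ⊆ Etil)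
    (hcover : ∀ x ∈ Etil, ∃ y ∈ Stil, Real.sqrt ((x - y) ⬝ᵥ (x - y)) ≤ ε) :
    ∀ x ∈ E, ∃ y ∈ Stil, Real.sqrt ((x - y) ⬝ᵥ (x - y)) ≤ Real.sqrt 2 * ε := by
  subst hE hEtil
  intro x hx
  have hJ : Icc (s + 1) d ⊆ Icc 1 d := Icc_subset_Icc (by omega) le_rfl
  have hcard : #(Icc 1 d) = Fintype.card (Fin d) := by simp
  set p := orthoProj u (Icc 1 d \ Icc (s + 1) d) x
  have hpE : ∑ i ∈ Icc 1 d, (p ⬝ᵥ u i) ^ 2 / lam i ≤ 1 :=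
    (sum_sq_div_orthoProj_le huON sdiff_subset (fun i hi => (hpos i hi).le) x).trans hx
  have hpJ : ∀ j ∈ Icc (s + 1) d, p ⬝ᵥ u j = 0 := fun j hj => by
    rw [orthoProj_dotProduct huON sdiff_subset x (hJ hj), if_neg (notMem_sdiff_of_mem_right hj)]
  obtain ⟨y, hyS, hpy⟩ := hcover p ⟨hpE, hpJ⟩
  obtain ⟨hε, hhead⟩ := Real.sqrt_le_iff.mp hpy
  have hsmall : ∀ j ∈ Icc (s + 1) d, lam j ≤ ε ^ 2 := fun j hj => by
    obtain ⟨hsj, hjd⟩ := mem_Icc.1 hj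
    exact (hord (s + 1) (hJ (left_mem_Icc.2 (hsj.trans hjd))) j (hJ hj) hsj).trans hls
  have htail : ∑ j ∈ Icc (s + 1) d, (x ⬝ᵥ u j) ^ 2 ≤ ε ^ 2 :=
    sum_sq_le_of_sum_sq_div_le_one hJ hpos hx hsmall
  refine ⟨y, hyS, Real.sqrt_le_iff.mpr ⟨by positivity, ?_⟩⟩
  rw [sub_dotProduct_self_eq_orthoProj_add_sum_sq huON hcard hJ x y (hStil hyS).2, mul_pow,
    Real.sq_sqrt zero_le_two]
  linarith

/-- Let `λ_1 ≥ ... ≥ λ_d > 0`, let `E` be the ellipsoid with semi-axes `√λ_i` along an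
orthonormal basis `u_1, ..., u_d` (coordinates `x_i = x ⬝ᵥ u_i`), fix `ε > 0`, let
`s ∈ {1,...,d−1}` satisfy `λ_{s+1} ≤ ε²`, and let `Ẽ` be the truncated ellipsoid
(points of `E` whose coordinates `s+1, ..., d` vanish).  If `S̃ ⊆ Ẽ` is an `ε`-cover of
`Ẽ` in the Euclidean norm, then `S̃` is a `√2 ε`-cover of `E` in the Euclidean norm. -/
theorem truncated_ellipsoid_cover
    (d : ℕ) (lam : ℕ → ℝ) (u : ℕ → (Fin d → ℝ))
    (huON : ∀ i ∈ Finset.Icc 1 d, ∀ j ∈ Finset.Icc 1 d,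
      u i ⬝ᵥ u j = if i = j then (1 : ℝ) else 0)
    (hord : ∀ i ∈ Finset.Icc 1 d, ∀ j ∈ Finset.Icc 1 d, i ≤ j → lam j ≤ lam i)
    (hpos : ∀ i ∈ Finset.Icc 1 d, 0 < lam i)
    (ε : ℝ) (hε : 0 < ε)
    (s : ℕ) (hs1 : 1 ≤ s) (hsd : s ≤ d - 1) (hls : lam (s + 1) ≤ ε ^ 2)
    (E Etil : Set (Fin d → ℝ))
    (hE : E = {x | ∑ i ∈ Finset.Icc 1 d, (x ⬝ᵥ u i) ^ 2 / lam i ≤ 1})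
    (hEtil : Etil = {x ∈ E | ∀ i ∈ Finset.Icc (s + 1) d, x ⬝ᵥ u i = 0})
    (Stil : Finset (Fin d → ℝ)) (hStil : ↑Stil ⊆ Etil)
    (hcover : ∀ x ∈ Etil, ∃ y ∈ Stil, Real.sqrt ((x - y) ⬝ᵥ (x - y)) ≤ ε) :
    ∀ x ∈ E, ∃ y ∈ Stil, Real.sqrt ((x - y) ⬝ᵥ (x - y)) ≤ Real.sqrt 2 * ε :=
  truncated_ellipsoid_cover_general d lam u huON hord hpos ε s hls E Etil hE hEtil Stil hStil hcover
end

section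
/- Let μ_m > 0, α > 0, and r ≥ 1 be an integer, and suppose T_0 ≥ ((r+1)/(2 μ_m))^{1/α}. Then the function F(t) = (μ_m + 2(T_0 + t)^{−α}) t^{2/(1+r)} is nondecreasing on [1, ∞); in particular, for all 1 ≤ t ≤ t', (μ_m + 2(T_0 + t)^{−α}) t^{2/(1+r)} ≤ (μ_m + 2(T_0 + t')^{−α}) t'^{2/(1+r)}. -/
/-!
Writing `F t = (m + 2 (T₀ + t)^(-α)) t^p` with `p = 2/(1+r)`, one has
`t^(1-p) F'(t) = p m + 2 p (T₀ + t)^(-α) - 2 α t (T₀ + t)^(-α-1)`.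
Bernoulli's inequality gives `2 α s ≤ (1 + s)^(α+1)`, which at `s = t/T₀` reads
`2 α t (T₀ + t)^(-α-1) ≤ T₀^(-α)`, and the lower bound on `T₀` is exactly `T₀^(-α) ≤ p m`.
So `F' ≥ 0` on `(0, ∞)`.
-/

open Real Set

lemma two_mul_mul_le_one_add_rpow {α s : ℝ} (hα : 0 ≤ α) (hs : 0 ≤ s) :
    2 * α * s ≤ (1 + s) ^ (α + 1) := by
  rcases le_total α 1 with hα1 | hα1
  · have := one_add_mul_self_le_rpow_one_add (by linarith) (by linarith : 1 ≤ α + 1) (s := s)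
    nlinarith
  · -- Bernoulli with exponent `(α + 1) / 2 ≥ 1`, then `(1 + x)^2 ≥ 4x`.
    have hb : 1 + (α + 1) / 2 * s ≤ (1 + s) ^ ((α + 1) / 2) :=
      one_add_mul_self_le_rpow_one_add (by linarith) (by linarith)
    have hsq : (1 + s) ^ (α + 1) = ((1 + s) ^ ((α + 1) / 2)) ^ 2 := by
      rw [← rpow_natCast, ← rpow_mul (by linarith)]
      norm_num
    rw [hsq]
    nlinarith [pow_le_pow_left₀ (by positivity) hb 2, sq_nonneg (1 - (α + 1) / 2 * s)]

lemma two_mul_mul_mul_add_rpow_neg_le {α T t : ℝ} (hα : 0 ≤ α) (hT : 0 < T) (ht : 0 ≤ t) :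
    2 * α * t * (T + t) ^ (-(α + 1)) ≤ T ^ (-α) := by
  have hTt : 0 < T + t := by linarith
  have hscaled : 2 * α * t * T ^ α ≤ (T + t) ^ (α + 1) :=
    calc 2 * α * t * T ^ α = T ^ (α + 1) * (2 * α * (t / T)) := by
          rw [rpow_add_one hT.ne']; field_simp
      _ ≤ T ^ (α + 1) * (1 + t / T) ^ (α + 1) := by
          gcongr; exact two_mul_mul_le_one_add_rpow hα (by positivity)
      _ = (T + t) ^ (α + 1) := by
          rw [← mul_rpow hT.le (by positivity), mul_one_add, mul_div_cancel₀ t hT.ne']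
  rw [rpow_neg hTt.le, rpow_neg hT.le, ← div_eq_mul_inv, ← one_div,
    div_le_div_iff₀ (by positivity) (by positivity)]
  linarith

lemma rpow_neg_le_inv_of_rpow_one_div_le {b α T : ℝ} (hb : 0 < b) (hα : 0 < α)
    (h : b ^ (1 / α) ≤ T) : T ^ (-α) ≤ b⁻¹ := by
  have hT : 0 < T := (rpow_pos_of_pos hb _).trans_le h
  rw [one_div, rpow_inv_le_iff_of_pos hb.le hT.le hα] at h
  rw [rpow_neg hT.le]
  exact inv_anti₀ hb h

section

variable {m c T α p : ℝ}

lemma hasDerivAt_add_rpow_neg_mul_rpow {t : ℝ} (hT : 0 < T + t) (ht : t ≠ 0) :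
    HasDerivAt (fun t : ℝ => (m + c * (T + t) ^ (-α)) * t ^ p)
      (c * (-α * (T + t) ^ (-α - 1)) * t ^ p + (m + c * (T + t) ^ (-α)) * (p * t ^ (p - 1)))
      t := by
  have hbase : HasDerivAt (fun x : ℝ => (T + x) ^ (-α)) (-α * (T + t) ^ (-α - 1)) t := by
    simpa using ((hasDerivAt_id t).const_add T).rpow_const (p := -α) (Or.inl hT.ne')
  have hpow : HasDerivAt (fun x : ℝ => x ^ p) (p * t ^ (p - 1)) t := by
    simpa using (hasDerivAt_id t).rpow_const (p := p) (Or.inl ht)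
  exact ((hbase.const_mul c).const_add m).mul hpow

lemma deriv_add_rpow_neg_mul_rpow_nonneg (hc : 0 ≤ c) (hα : 0 ≤ α) (hp : 0 ≤ p)
    (hT : 0 < T) (hcT : c * T ^ (-α) ≤ 2 * p * m) {t : ℝ} (ht : 0 < t) :
    0 ≤ c * (-α * (T + t) ^ (-α - 1)) * t ^ p
      + (m + c * (T + t) ^ (-α)) * (p * t ^ (p - 1)) := by
  have hTt : 0 < T + t := by linarith
  have hdecay := two_mul_mul_mul_add_rpow_neg_le hα hT ht.le
  have hfactor : c * (-α * (T + t) ^ (-α - 1)) * t ^ p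
      + (m + c * (T + t) ^ (-α)) * (p * t ^ (p - 1))
      = t ^ (p - 1) * ((p * m - c / 2 * (2 * α * t * (T + t) ^ (-(α + 1))))
        + p * c * (T + t) ^ (-α)) := by
    have htp : t ^ p = t ^ (p - 1) * t := by rw [← rpow_add_one ht.ne']; ring_nf
    rw [show -α - 1 = -(α + 1) by ring, htp]
    ring
  rw [hfactor]
  have : 0 ≤ p * m - c / 2 * (2 * α * t * (T + t) ^ (-(α + 1))) := by
    nlinarith [mul_le_mul_of_nonneg_left hdecay (by positivity : 0 ≤ c / 2)]
  have : 0 ≤ (T + t) ^ (-α) := (rpow_pos_of_pos hTt _).le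
  positivity

lemma monotoneOn_add_rpow_neg_mul_rpow (hc : 0 ≤ c) (hα : 0 ≤ α) (hp : 0 ≤ p)
    (hT : 0 < T) (hcT : c * T ^ (-α) ≤ 2 * p * m) :
    MonotoneOn (fun t : ℝ => (m + c * (T + t) ^ (-α)) * t ^ p) (Ici 0) := by
  have hderiv (t : ℝ) (ht : 0 < t) := hasDerivAt_add_rpow_neg_mul_rpow (m := m) (c := c)
    (α := α) (p := p) (by linarith : 0 < T + t) ht.ne'
  refine monotoneOn_of_deriv_nonneg (convex_Ici 0) ?_ ?_ ?_
  · have hbase : ContinuousOn (fun t : ℝ => (T + t) ^ (-α)) (Ici 0) := fun t ht =>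
      ((continuous_const_add T).continuousAt.rpow_const
        (Or.inl (by linarith [mem_Ici.mp ht]))).continuousWithinAt
    exact ((hbase.const_smul c).const_add m).mul (continuous_rpow_const hp).continuousOn
  · rw [interior_Ici]
    exact fun t ht => (hderiv t ht).differentiableAt.differentiableWithinAt
  · rw [interior_Ici]
    intro t ht
    rw [(hderiv t ht).deriv]
    exact deriv_add_rpow_neg_mul_rpow_nonneg hc hα hp hT hcT ht

end

theorem F_nondecreasing_of_large_T0_general
    (r : ℕ) (mum α T0 : ℝ) (hmum : 0 < mum) (hα : 0 < α)
    (hT0 : (((r : ℝ) + 1) / (2 * mum)) ^ (1 / α) ≤ T0) :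
    MonotoneOn (fun t : ℝ => (mum + 2 * (T0 + t) ^ (-α)) * t ^ ((2 : ℝ) / (1 + (r : ℝ))))
      (Set.Ici (1 : ℝ)) ∧
    ∀ t t' : ℝ, 1 ≤ t → t ≤ t' →
      (mum + 2 * (T0 + t) ^ (-α)) * t ^ ((2 : ℝ) / (1 + (r : ℝ))) ≤
        (mum + 2 * (T0 + t') ^ (-α)) * t' ^ ((2 : ℝ) / (1 + (r : ℝ))) := by
  have hb : 0 < ((r : ℝ) + 1) / (2 * mum) := by positivity
  have hT0pos : 0 < T0 := (rpow_pos_of_pos hb _).trans_le hT0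
  have hdecay := rpow_neg_le_inv_of_rpow_one_div_le hb hα hT0
  have hcT : 2 * T0 ^ (-α) ≤ 2 * (2 / (1 + (r : ℝ))) * mum := by
    rw [inv_div] at hdecay
    calc 2 * T0 ^ (-α) ≤ 2 * (2 * mum / (r + 1)) := by gcongr
      _ = 2 * (2 / (1 + (r : ℝ))) * mum := by ring
  have hmono := (monotoneOn_add_rpow_neg_mul_rpow zero_le_two hα.le (by positivity) hT0pos
    hcT).mono (Ici_subset_Ici.mpr zero_le_one)
  exact ⟨hmono, fun t t' ht htt' => hmono ht (ht.trans htt') htt'⟩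

/-- Let `μ_m > 0`, `α > 0`, and `r ≥ 1` be an integer, and suppose
`T_0 ≥ ((r+1)/(2 μ_m))^(1/α)`.  Then `F(t) = (μ_m + 2 (T_0 + t)^(−α)) t^(2/(1+r))`
is nondecreasing on `[1, ∞)`; in particular, for all `1 ≤ t ≤ t'`,
`(μ_m + 2 (T_0 + t)^(−α)) t^(2/(1+r)) ≤ (μ_m + 2 (T_0 + t')^(−α)) t'^(2/(1+r))`. -/
theorem F_nondecreasing_of_large_T0
    (r : ℕ) (hr : 1 ≤ r) (mum α T0 : ℝ) (hmum : 0 < mum) (hα : 0 < α)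
    (hT0 : (((r : ℝ) + 1) / (2 * mum)) ^ (1 / α) ≤ T0) :
    MonotoneOn (fun t : ℝ => (mum + 2 * (T0 + t) ^ (-α)) * t ^ ((2 : ℝ) / (1 + (r : ℝ))))
      (Set.Ici (1 : ℝ)) ∧
    ∀ t t' : ℝ, 1 ≤ t → t ≤ t' →
      (mum + 2 * (T0 + t) ^ (-α)) * t ^ ((2 : ℝ) / (1 + (r : ℝ))) ≤
        (mum + 2 * (T0 + t') ^ (-α)) * t' ^ ((2 : ℝ) / (1 + (r : ℝ))) :=
  F_nondecreasing_of_large_T0_general r mum α T0 hmum hα hT0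
end
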